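/- Let L* : Matrix(n×(k+1), ℝ) → ℝ be C² and satisfy the fundamental equations in all entries of its argument: writing the argument as (p | v) with p an n×k matrix and v ∈ ℝⁿ the last column, for all rows A, B ∈ {1,…,n} and all columns I, J ∈ {1,…,k+1}, ∂²L*/∂m_A^I∂m_B^J + ∂²L*/∂m_B^I∂m_A^J = 0. Define L on the set of (n+1)×(k+1) real matrices M with nonzero corner entry u = M_{n+1}^{k+1}, with blocks p (upper-left n×k), v (last column without corner), w (last row without corner), by L(M) := u · L*( p − u⁻¹·v·w | u⁻¹·v ). Then L satisfies the fundamental equations with respect to all entries of the (n+1)×(k+1) matrix M, at every point of its domain: for all rows A', B' ∈ {1,…,n+1} and columns I', J' ∈ {1,…,k+1}, ∂²L/∂M_{A'}^{I'}∂M_{B'}^{J'} + ∂²L/∂M_{B'}^{I'}∂M_{A'}^{J'} = 0. -/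

import Mathlib

open MeasureTheory
open scoped BigOperators

noncomputable section

/-- Product of matrices given as functions (entry `(i,k)` is `∑ j, M i j * N j k`). -/
def mmul {a b c : ℕ} (M : Fin a → Fin b → ℝ) (N : Fin b → Fin c → ℝ) :
    Fin a → Fin c → ℝ :=
  fun i k => ∑ j, M i j * N j k

/-- Determinant of a square matrix given as a function. -/
def fdet {a : ℕ} (M : Fin a → Fin a → ℝ) : ℝ :=
  Matrix.det (Matrix.of M)

/-- Partial derivative of a function of a matrix with respect to the `(i,j)` entry. -/
def pdM {a b : ℕ} (L : (Fin a → Fin b → ℝ) → ℝ) (i : Fin a) (j : Fin b)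
    (m : Fin a → Fin b → ℝ) : ℝ :=
  deriv (fun t : ℝ => L (fun i' j' => m i' j' + (if i' = i ∧ j' = j then t else 0))) 0

/-- Partial derivative of a function of a vector with respect to the `i`-th coordinate. -/
def pdV {a : ℕ} (f : (Fin a → ℝ) → ℝ) (i : Fin a) (x : Fin a → ℝ) : ℝ :=
  deriv (fun t : ℝ => f (fun i' => x i' + (if i' = i then t else 0))) 0

/-- The fundamental equations for a function of an `a × b` matrix:
for all rows `i₁, i₂` and columns `j₁, j₂`,
`∂²L/∂m_{i₁}^{j₁}∂m_{i₂}^{j₂} + ∂²L/∂m_{i₂}^{j₁}∂m_{i₁}^{j₂} = 0`. -/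
def FundEqs {a b : ℕ} (L : (Fin a → Fin b → ℝ) → ℝ) : Prop :=
  ∀ (i₁ i₂ : Fin a) (j₁ j₂ : Fin b) (m : Fin a → Fin b → ℝ),
    pdM (fun m' => pdM L i₂ j₂ m') i₁ j₁ m + pdM (fun m' => pdM L i₁ j₂ m') i₂ j₁ m = 0

/-- The velocity matrix of a path `γ`: `(vel γ t) F A = ∂γ^A/∂t^F (t)`. -/
def vel {r n : ℕ} (γ : (Fin r → ℝ) → (Fin n → ℝ)) (t : Fin r → ℝ) :
    Fin r → Fin n → ℝ :=
  fun F A => pdV (fun s => γ s A) F t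

/-- The matrix of gradients of a copath `f`: `(grad f x) A K = ∂f^K/∂x^A (x)`. -/
def grad {n k : ℕ} (f : (Fin n → ℝ) → (Fin k → ℝ)) (x : Fin n → ℝ) :
    Fin n → Fin k → ℝ :=
  fun A K => pdV (fun y => f y K) A x

/-- An even `r`-form on an open set `U ⊆ ℝⁿ`: a smooth function `L(x, ẋ)` of a point
`x` and an `r × n` matrix `ẋ` which is covariant (`L(x, h·ẋ) = det h · L(x, ẋ)` for
invertible `h`) and satisfies the fundamental equations in the entries of `ẋ`. -/
def IsEvenForm {n r : ℕ} (U : Set (Fin n → ℝ))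
    (L : (Fin n → ℝ) → (Fin r → Fin n → ℝ) → ℝ) : Prop :=
  ContDiffOn ℝ (⊤ : ℕ∞)
      (fun q : (Fin n → ℝ) × (Fin r → Fin n → ℝ) => L q.1 q.2)
      (U ×ˢ (Set.univ : Set (Fin r → Fin n → ℝ))) ∧
  (∀ x ∈ U, ∀ (xdot : Fin r → Fin n → ℝ) (h : Fin r → Fin r → ℝ), fdet h ≠ 0 →
    L x (mmul h xdot) = fdet h * L x xdot) ∧
  (∀ x ∈ U, FundEqs (L x))

/-- The differential of a Lagrangian of paths `L(x, ẋ)`: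
`ΔL(x, (ẋ; ẏ)) = (−1)^r Σ_A ẏ^A (∂L/∂x^A − Σ_{F,B} ẋ_F^B ∂²L/∂x^B∂ẋ_F^A)`,
where `ẋ` consists of the first `r` rows and `ẏ` is the last row of the argument. -/
def Dform {n r : ℕ} (L : (Fin n → ℝ) → (Fin r → Fin n → ℝ) → ℝ) :
    (Fin n → ℝ) → (Fin (r + 1) → Fin n → ℝ) → ℝ :=
  fun x M => (-1 : ℝ) ^ r * ∑ A, M (Fin.last r) A *
    (pdV (fun x' => L x' (fun F => M (Fin.castSucc F))) A x
      - ∑ F, ∑ B, M (Fin.castSucc F) B *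
          pdV (fun x' => pdM (L x') F A (fun G => M (Fin.castSucc G))) B x)

/-- An even mixed form of codegree `k` and additional degree `r` on an open set
`U ⊆ ℝⁿ`: a smooth function `𝓛(x, p, w)` which is right-covariant, left-covariant,
admissible, and satisfies the fundamental equations in the entries of the stacked
`(n+r) × k` matrix (`p` over `w`). -/
def IsMixedForm {n k r : ℕ} (U : Set (Fin n → ℝ))
    (L : (Fin n → ℝ) → (Fin n → Fin k → ℝ) → (Fin r → Fin k → ℝ) → ℝ) : Prop :=
  ContDiffOn ℝ (⊤ : ℕ∞)
      (fun q : (Fin n → ℝ) × (Fin n → Fin k → ℝ) × (Fin r → Fin k → ℝ) =>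
        L q.1 q.2.1 q.2.2)
      (U ×ˢ (Set.univ : Set ((Fin n → Fin k → ℝ) × (Fin r → Fin k → ℝ)))) ∧
  (∀ x ∈ U, ∀ (p : Fin n → Fin k → ℝ) (w : Fin r → Fin k → ℝ) (g : Fin k → Fin k → ℝ),
    fdet g ≠ 0 → L x (mmul p g) (mmul w g) = fdet g * L x p w) ∧
  (∀ x ∈ U, ∀ (p : Fin n → Fin k → ℝ) (w : Fin r → Fin k → ℝ) (h : Fin r → Fin r → ℝ),
    fdet h ≠ 0 → L x p (mmul h w) = fdet h * L x p w) ∧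
  (∀ x ∈ U, ∀ (p : Fin n → Fin k → ℝ) (w : Fin r → Fin k → ℝ) (a : Fin n → Fin r → ℝ),
    L x (p + mmul a w) w = L x p w) ∧
  (∀ x ∈ U, FundEqs (fun m : Fin (n + r) → Fin k → ℝ =>
    L x (fun A => m (Fin.castAdd r A)) (fun F => m (Fin.natAdd n F))))

/-- The differential of a mixed Lagrangian `𝓛(x, p, w)`:
`Δ𝓛(x, p, ŵ) = (−1)^r Σ_{K,A} w'^K ∂²𝓛/∂x^A∂p_A^K (x, p, w)`, where `ŵ` has first
`r` rows `w` and last row `w'`. -/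
def Dmix {n k r : ℕ}
    (L : (Fin n → ℝ) → (Fin n → Fin k → ℝ) → (Fin r → Fin k → ℝ) → ℝ) :
    (Fin n → ℝ) → (Fin n → Fin k → ℝ) → (Fin (r + 1) → Fin k → ℝ) → ℝ :=
  fun x p what => (-1 : ℝ) ^ r * ∑ K, ∑ A, what (Fin.last r) K *
    pdV (fun x' => pdM (fun p' => L x' p' (fun F => what (Fin.castSucc F))) A K p) A x

/-- An even dual form of codegree `k` on an open set `U ⊆ ℝⁿ`: a smooth function
`𝓛(x, p)` of a point `x` and an `n × k` matrix `p` of momenta which is covariant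
(`𝓛(x, p·g) = det g · 𝓛(x, p)` for invertible `g`) and satisfies the fundamental
equations in the entries of `p`. -/
def IsDualForm {n k : ℕ} (U : Set (Fin n → ℝ))
    (L : (Fin n → ℝ) → (Fin n → Fin k → ℝ) → ℝ) : Prop :=
  ContDiffOn ℝ (⊤ : ℕ∞)
      (fun q : (Fin n → ℝ) × (Fin n → Fin k → ℝ) => L q.1 q.2)
      (U ×ˢ (Set.univ : Set (Fin n → Fin k → ℝ))) ∧
  (∀ x ∈ U, ∀ (p : Fin n → Fin k → ℝ) (g : Fin k → Fin k → ℝ), fdet g ≠ 0 →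
    L x (mmul p g) = fdet g * L x p) ∧
  (∀ x ∈ U, FundEqs (L x))

/-- The identity matrix as a function. -/
def idm (n : ℕ) : Fin n → Fin n → ℝ := fun i j => if i = j then 1 else 0

/-- The extension of a function `L*` of an `n × (k+1)` matrix to a function of an
`(n+1) × (k+1)` matrix `M` (with corner entry `u`, last column `v`, last row `w`,
upper-left block `p`) by the formula `L(M) := u · L*(p − u⁻¹·v·w | u⁻¹·v)`. -/
def Lext {n k : ℕ} (Lstar : (Fin n → Fin (k + 1) → ℝ) → ℝ)
    (M : Fin (n + 1) → Fin (k + 1) → ℝ) : ℝ :=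
  M (Fin.last n) (Fin.last k) *
    Lstar (fun A I =>
      if I = Fin.last k then
        (M (Fin.last n) (Fin.last k))⁻¹ * M (Fin.castSucc A) (Fin.last k)
      else
        M (Fin.castSucc A) I - (M (Fin.last n) (Fin.last k))⁻¹ *
          M (Fin.castSucc A) (Fin.last k) * M (Fin.last n) I)

/-! For a `C²` function the fundamental equations at a point say exactly that the Hessian
vanishes on rank-one matrices `γ δᵀ` (polarize the quadratic form `X ↦ D²f(X, X)`), i.e. that
`t ↦ f(m + t·γδᵀ)` has vanishing second derivative at `t = 0`.  For `L*` this holds at every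
point, so `L*` is affine along rank-one lines.  The substitution
`M ↦ (p − u⁻¹·v·w | u⁻¹·v)` maps the line `M + t·αβᵀ` into the rank-one line through the image
of `M`, with parameter `t / u(t)`, where `u(t) = u + t·α_{n+1}β_{k+1}` is the corner entry of
`M + t·αβᵀ`.  Multiplying by `u(t)` turns an affine function of `t / u(t)` into an affine
function of `t`, so `L` is affine along rank-one lines near `M`, and the fundamental equations
follow. -/

open Filter Topology

section SecondDerivative

variable {E : Type*} [NormedAddCommGroup E] [NormedSpace ℝ E] {f : E → ℝ} {x : E}

lemma lineDeriv_lineDeriv_eq_fderiv_fderiv (hf : ContDiffAt ℝ 2 f x) (v w : E) :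
    lineDeriv ℝ (fun y => lineDeriv ℝ f y w) x v = fderiv ℝ (fderiv ℝ f) x v w := by
  have hdiff : (fun y => lineDeriv ℝ f y w) =ᶠ[𝓝 x] fun y => fderiv ℝ f y w :=
    (hf.eventually (by simp)).mono fun y hy =>
      (hy.differentiableAt two_ne_zero).lineDeriv_eq_fderiv
  have h2 : DifferentiableAt ℝ (fderiv ℝ f) x :=
    (hf.fderiv_right one_add_one_eq_two.le).differentiableAt one_ne_zero
  rw [hdiff.lineDeriv_eq, (h2.clm_apply (differentiableAt_const w)).lineDeriv_eq_fderiv,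
    fderiv_clm_apply h2 (differentiableAt_const w)]
  simp

lemma deriv_deriv_apply_add_smul {v : E} {t₀ : ℝ} (hf : ContDiffAt ℝ 2 f (x + t₀ • v)) :
    deriv (deriv fun t : ℝ => f (x + t • v)) t₀ = fderiv ℝ (fderiv ℝ f) (x + t₀ • v) v v := by
  have hline : ∀ t : ℝ, HasDerivAt (fun t : ℝ => x + t • v) v t := fun t => by
    simpa using ((hasDerivAt_id t).smul_const v).const_add x
  have hdiff : ∀ᶠ t in 𝓝 t₀, DifferentiableAt ℝ f (x + t • v) :=
    (hline t₀).continuousAt.eventually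
      ((hf.eventually (by simp)).mono fun y hy => hy.differentiableAt two_ne_zero)
  have hderiv : deriv (fun t : ℝ => f (x + t • v)) =ᶠ[𝓝 t₀]
      fun t => fderiv ℝ f (x + t • v) v :=
    hdiff.mono fun t ht => (ht.hasFDerivAt.comp_hasDerivAt t (hline t)).deriv
  have h2 : DifferentiableAt ℝ (fderiv ℝ f) (x + t₀ • v) :=
    (hf.fderiv_right one_add_one_eq_two.le).differentiableAt one_ne_zero
  have hcomp : HasDerivAt (fun t : ℝ => fderiv ℝ f (x + t • v))
      (fderiv ℝ (fderiv ℝ f) (x + t₀ • v) v) t₀ :=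
    h2.hasFDerivAt.comp_hasDerivAt t₀ (hline t₀)
  rw [hderiv.deriv_eq, (hcomp.clm_apply (hasDerivAt_const t₀ v)).deriv]
  simp

lemma eq_add_mul_of_deriv_deriv_eq_zero {g : ℝ → ℝ} (hg : ContDiff ℝ 2 g)
    (h : ∀ t, deriv (deriv g) t = 0) (t : ℝ) : g t = g 0 + deriv g 0 * t := by
  obtain ⟨hg₁, -, hg'⟩ := contDiff_succ_iff_deriv.1 (show ContDiff ℝ (1 + 1) g from hg)
  have hconst : ∀ s, deriv g s = deriv g 0 :=
    fun s => is_const_of_deriv_eq_zero (hg'.differentiable one_ne_zero) h s 0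
  have hsub : ∀ s, HasDerivAt (fun s => g s - deriv g 0 * s) 0 s := fun s => by
    have := (hg₁ s).hasDerivAt.sub ((hasDerivAt_id' s).const_mul (deriv g 0))
    rwa [hconst s, mul_one, sub_self] at this
  have := is_const_of_deriv_eq_zero (fun s => (hsub s).differentiableAt)
    (fun s => (hsub s).deriv) t 0
  simp only [mul_zero, sub_zero] at this
  linarith

lemma exists_apply_add_smul_eq_add_mul (hf : ContDiff ℝ 2 f) {v : E}
    (h : ∀ y, fderiv ℝ (fderiv ℝ f) y v v = 0) (x : E) :
    ∃ c, ∀ t : ℝ, f (x + t • v) = f x + c * t := by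
  have hg : ContDiff ℝ 2 fun t : ℝ => f (x + t • v) := by fun_prop
  refine ⟨deriv (fun t : ℝ => f (x + t • v)) 0, fun t => ?_⟩
  simpa using eq_add_mul_of_deriv_deriv_eq_zero hg
    (fun s => (deriv_deriv_apply_add_smul hf.contDiffAt).trans (h _)) t

lemma fderiv_fderiv_apply_self_eq_zero_of_eventually (hf : ContDiffAt ℝ 2 f x) {v : E}
    {c₀ c₁ : ℝ} (h : ∀ᶠ t in 𝓝 0, f (x + t • v) = c₀ + c₁ * t) :
    fderiv ℝ (fderiv ℝ f) x v v = 0 := by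
  have := deriv_deriv_apply_add_smul (v := v) (t₀ := 0) (by simpa using hf)
  rw [zero_smul, add_zero] at this
  rw [← this, (Filter.EventuallyEq.deriv h).deriv_eq]
  simp

end SecondDerivative

section RankOne

variable {m n : Type*}

def rankOne (γ : m → ℝ) (δ : n → ℝ) : m → n → ℝ := fun i j => γ i * δ j

lemma rankOne_add_left (γ γ' : m → ℝ) (δ : n → ℝ) :
    rankOne (γ + γ') δ = rankOne γ δ + rankOne γ' δ := by
  ext i j; simp [rankOne, add_mul]

lemma rankOne_add_right (γ : m → ℝ) (δ δ' : n → ℝ) :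
    rankOne γ (δ + δ') = rankOne γ δ + rankOne γ δ' := by
  ext i j; simp [rankOne, mul_add]

variable [Fintype m] [Fintype n] [DecidableEq m] [DecidableEq n]

lemma rankOne_eq_sum (γ : m → ℝ) (δ : n → ℝ) :
    rankOne γ δ = ∑ i, ∑ j, (γ i * δ j) • rankOne (Pi.single i 1) (Pi.single j 1) := by
  ext i' j'
  simp [rankOne, Finset.sum_apply, Pi.single_apply]

lemma forall_apply_rankOne_self_eq_zero_iff (H : (m → n → ℝ) →L[ℝ] (m → n → ℝ) →L[ℝ] ℝ)
    (hH : ∀ X Y, H X Y = H Y X) :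
    (∀ γ δ, H (rankOne γ δ) (rankOne γ δ) = 0) ↔
      ∀ i₁ i₂ j₁ j₂,
        H (rankOne (Pi.single i₁ 1) (Pi.single j₁ 1)) (rankOne (Pi.single i₂ 1) (Pi.single j₂ 1))
          + H (rankOne (Pi.single i₂ 1) (Pi.single j₁ 1))
              (rankOne (Pi.single i₁ 1) (Pi.single j₂ 1)) = 0 := by
  set e : m → n → m → n → ℝ := fun i₁ j₁ i₂ j₂ =>
    H (rankOne (Pi.single i₁ 1) (Pi.single j₁ 1)) (rankOne (Pi.single i₂ 1) (Pi.single j₂ 1))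
  constructor
  · intro h i₁ i₂ j₁ j₂
    have hcross : ∀ γ γ' δ, H (rankOne γ δ) (rankOne γ' δ) = 0 := fun γ γ' δ => by
      have := h (γ + γ') δ
      simp only [rankOne_add_left, map_add, add_apply, h, hH (rankOne γ' δ)] at this
      linarith
    have := hcross (Pi.single i₁ 1) (Pi.single i₂ 1) (Pi.single j₁ 1 + Pi.single j₂ 1)
    simp only [rankOne_add_right, map_add, add_apply, hcross] at this
    rw [hH (rankOne (Pi.single i₂ 1) _)]
    linarith
  · intro h γ δ
    have hexp : H (rankOne γ δ) (rankOne γ δ)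
        = ∑ i₁, ∑ i₂, ∑ j₁, ∑ j₂, γ i₁ * γ i₂ * δ j₁ * δ j₂ * e i₂ j₂ i₁ j₁ := by
      rw [rankOne_eq_sum γ δ]
      simp only [map_sum, map_smul, sum_apply, smul_apply, smul_eq_mul, Finset.mul_sum]
      refine Finset.sum_congr rfl fun i₁ _ => ?_
      rw [Finset.sum_comm]
      simp only [e, mul_assoc, mul_left_comm]
    -- the coefficients are symmetric in `i₁ ↔ i₂`, so the terms pair up as in `h`
    have hswap : H (rankOne γ δ) (rankOne γ δ)
        = ∑ i₁, ∑ i₂, ∑ j₁, ∑ j₂, γ i₁ * γ i₂ * δ j₁ * δ j₂ * e i₁ j₂ i₂ j₁ := by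
      rw [hexp, Finset.sum_comm]
      simp only [mul_comm (γ _) (γ _)]
    have : H (rankOne γ δ) (rankOne γ δ) + H (rankOne γ δ) (rankOne γ δ) = 0 := by
      nth_rewrite 1 [hexp]
      rw [hswap]
      simp only [← Finset.sum_add_distrib, ← mul_add]
      simp [e, h]
    linarith

end RankOne

section FundamentalEquations

variable {a b : ℕ} {f : (Fin a → Fin b → ℝ) → ℝ} {m : Fin a → Fin b → ℝ}

lemma pdM_eq_lineDeriv (f : (Fin a → Fin b → ℝ) → ℝ) (i : Fin a) (j : Fin b)
    (m : Fin a → Fin b → ℝ) :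
    pdM f i j m = lineDeriv ℝ f m (rankOne (Pi.single i 1) (Pi.single j 1)) := by
  unfold pdM lineDeriv
  congr! 3 with t
  funext i' j'
  by_cases hi : i' = i <;> by_cases hj : j' = j <;> simp [rankOne, hi, hj]

lemma pdM_pdM_eq_fderiv_fderiv (hf : ContDiffAt ℝ 2 f m) (i₁ i₂ : Fin a) (j₁ j₂ : Fin b) :
    pdM (fun m' => pdM f i₂ j₂ m') i₁ j₁ m = fderiv ℝ (fderiv ℝ f) m
      (rankOne (Pi.single i₁ 1) (Pi.single j₁ 1)) (rankOne (Pi.single i₂ 1) (Pi.single j₂ 1)) := by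
  simp only [pdM_eq_lineDeriv]
  exact lineDeriv_lineDeriv_eq_fderiv_fderiv hf _ _

lemma forall_pdM_pdM_add_eq_zero_iff (hf : ContDiffAt ℝ 2 f m) :
    (∀ i₁ i₂ j₁ j₂, pdM (fun m' => pdM f i₂ j₂ m') i₁ j₁ m
        + pdM (fun m' => pdM f i₁ j₂ m') i₂ j₁ m = 0) ↔
      ∀ γ δ, fderiv ℝ (fderiv ℝ f) m (rankOne γ δ) (rankOne γ δ) = 0 := by
  simp only [pdM_pdM_eq_fderiv_fderiv hf]
  exact (forall_apply_rankOne_self_eq_zero_iff _ (hf.isSymmSndFDerivAt (by simp))).symm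

lemma FundEqs.exists_apply_add_smul_rankOne (hf : ContDiff ℝ 2 f) (hfund : FundEqs f)
    (q : Fin a → Fin b → ℝ) (γ : Fin a → ℝ) (δ : Fin b → ℝ) :
    ∃ c, ∀ t : ℝ, f (q + t • rankOne γ δ) = f q + c * t :=
  exists_apply_add_smul_eq_add_mul hf (fun y => (forall_pdM_pdM_add_eq_zero_iff hf.contDiffAt).1
    (fun i₁ i₂ j₁ j₂ => hfund i₁ i₂ j₁ j₂ y) γ δ) q

end FundamentalEquations

section Extension

variable {n k : ℕ}

def lextArg (M : Fin (n + 1) → Fin (k + 1) → ℝ) : Fin n → Fin (k + 1) → ℝ :=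
  fun A I =>
    if I = Fin.last k then
      (M (Fin.last n) (Fin.last k))⁻¹ * M (Fin.castSucc A) (Fin.last k)
    else
      M (Fin.castSucc A) I - (M (Fin.last n) (Fin.last k))⁻¹ *
        M (Fin.castSucc A) (Fin.last k) * M (Fin.last n) I

lemma Lext_eq_mul_lextArg (Lstar : (Fin n → Fin (k + 1) → ℝ) → ℝ)
    (M : Fin (n + 1) → Fin (k + 1) → ℝ) :
    Lext Lstar M = M (Fin.last n) (Fin.last k) * Lstar (lextArg M) := rfl

lemma contDiffAt_lextArg {r : WithTop ℕ∞} {M : Fin (n + 1) → Fin (k + 1) → ℝ}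
    (hM : M (Fin.last n) (Fin.last k) ≠ 0) : ContDiffAt ℝ r lextArg M := by
  refine contDiffAt_pi.2 fun A => contDiffAt_pi.2 fun I => ?_
  unfold lextArg
  split_ifs <;> fun_prop (disch := assumption)

lemma contDiffAt_Lext {r : WithTop ℕ∞} {Lstar : (Fin n → Fin (k + 1) → ℝ) → ℝ}
    (hL : ContDiff ℝ r Lstar) {M : Fin (n + 1) → Fin (k + 1) → ℝ}
    (hM : M (Fin.last n) (Fin.last k) ≠ 0) : ContDiffAt ℝ r (Lext Lstar) M := by
  have hcorner : ContDiffAt ℝ r (fun M : Fin (n + 1) → Fin (k + 1) → ℝ =>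
      M (Fin.last n) (Fin.last k)) M := by fun_prop
  exact hcorner.mul (hL.contDiffAt.comp M (contDiffAt_lextArg hM))

lemma exists_lextArg_add_smul_rankOne (M : Fin (n + 1) → Fin (k + 1) → ℝ)
    (hM : M (Fin.last n) (Fin.last k) ≠ 0) (α : Fin (n + 1) → ℝ) (β : Fin (k + 1) → ℝ) :
    ∃ γ δ, ∀ t : ℝ, M (Fin.last n) (Fin.last k) + t * (α (Fin.last n) * β (Fin.last k)) ≠ 0 →
      lextArg (M + t • rankOne α β) = lextArg M
        + (t / (M (Fin.last n) (Fin.last k) + t * (α (Fin.last n) * β (Fin.last k))))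
          • rankOne γ δ := by
  refine ⟨fun A => α (Fin.castSucc A)
      - α (Fin.last n) * (M (Fin.last n) (Fin.last k))⁻¹ * M (Fin.castSucc A) (Fin.last k),
    fun I => if I = Fin.last k then β (Fin.last k)
      else M (Fin.last n) (Fin.last k) * β I - β (Fin.last k) * M (Fin.last n) I,
    fun t ht => ?_⟩
  funext A I
  simp only [lextArg, rankOne, Pi.add_apply, Pi.smul_apply, smul_eq_mul]
  set u' := M (Fin.last n) (Fin.last k) + t * (α (Fin.last n) * β (Fin.last k)) with hu'
  split_ifs <;> field_simp <;> rw [hu'] <;> ring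

lemma FundEqs.exists_eventually_Lext_add_smul_rankOne_eq
    {Lstar : (Fin n → Fin (k + 1) → ℝ) → ℝ} (hfund : FundEqs Lstar) (hL : ContDiff ℝ 2 Lstar)
    {M : Fin (n + 1) → Fin (k + 1) → ℝ} (hM : M (Fin.last n) (Fin.last k) ≠ 0)
    (α : Fin (n + 1) → ℝ) (β : Fin (k + 1) → ℝ) :
    ∃ c₀ c₁ : ℝ, ∀ᶠ t in 𝓝 0, Lext Lstar (M + t • rankOne α β) = c₀ + c₁ * t := by
  obtain ⟨γ, δ, hline⟩ := exists_lextArg_add_smul_rankOne M hM α β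
  obtain ⟨c, hc⟩ := hfund.exists_apply_add_smul_rankOne hL (lextArg M) γ δ
  set u := M (Fin.last n) (Fin.last k)
  refine ⟨u * Lstar (lextArg M), α (Fin.last n) * β (Fin.last k) * Lstar (lextArg M) + c, ?_⟩
  have hne : ∀ᶠ t : ℝ in 𝓝 0, u + t * (α (Fin.last n) * β (Fin.last k)) ≠ 0 :=
    ContinuousAt.eventually_ne (by fun_prop) (by simpa using hM)
  filter_upwards [hne] with t ht
  have hcorner : (M + t • rankOne α β) (Fin.last n) (Fin.last k)
      = u + t * (α (Fin.last n) * β (Fin.last k)) := rfl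
  rw [Lext_eq_mul_lextArg, hcorner, hline t ht, hc]
  set u' := u + t * (α (Fin.last n) * β (Fin.last k)) with hu'
  field_simp
  rw [hu']
  ring

end Extension

/-- If a C² function `L*` of an `n × (k+1)` matrix satisfies the
fundamental equations, then its extension `L(M) = u · L*(p − u⁻¹·v·w | u⁻¹·v)`
satisfies the fundamental equations in all entries of the `(n+1) × (k+1)` matrix
`M`, at every point where the corner entry `u` is nonzero. -/
theorem statement_9 (n k : ℕ) (Lstar : (Fin n → Fin (k + 1) → ℝ) → ℝ)
    (hC2 : ContDiff ℝ 2 Lstar) (hfund : FundEqs Lstar) :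
    ∀ M : Fin (n + 1) → Fin (k + 1) → ℝ, M (Fin.last n) (Fin.last k) ≠ 0 →
      ∀ (A' B' : Fin (n + 1)) (I' J' : Fin (k + 1)),
        pdM (fun M' => pdM (Lext Lstar) B' J' M') A' I' M
          + pdM (fun M' => pdM (Lext Lstar) A' J' M') B' I' M = 0 := by
  intro M hM
  have hL : ContDiffAt ℝ 2 (Lext Lstar) M := contDiffAt_Lext hC2 hM
  refine (forall_pdM_pdM_add_eq_zero_iff hL).2 fun α β => ?_
  obtain ⟨c₀, c₁, h⟩ := hfund.exists_eventually_Lext_add_smul_rankOne_eq hC2 hM α β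
  exact fderiv_fderiv_apply_self_eq_zero_of_eventually hL h
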